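/- arXiv:1805.00440 — 3 statements merged into one kernel-verified Lean document; each statement's English description precedes it below -/
import Mathlib

section
/- Let F be a totally real number field of degree d over ℚ, with real embeddings σ_1, …, σ_d : F → ℝ, and let 𝓞_F be its ring of integers. Let Γ be a subgroup of finite index of the unit group 𝓞_F^×, and fix a d-tuple of integers (n_1, …, n_d) ≠ (0, …, 0). Then ∏_{i=1}^d |σ_i(t)|^{n_i} = 1 for every t ∈ Γ if and only if all the n_i are equal to a common integer. -/
/-!
Taking logarithms, the condition says that the linear form `x ↦ ∑ nᵢ xᵢ` vanishes on the vectors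
`(log |σᵢ t|)ᵢ` for `t ∈ Γ`. As `Γ` has finite index, it then vanishes on these vectors for all
units `t`, and by Dirichlet's unit theorem they span the hyperplane `∑ xᵢ = 0`. A linear form
vanishing on that hyperplane is a multiple of `∑ xᵢ`, i.e. all `nᵢ` are equal.
-/

open NumberField InfinitePlace Units dirichletUnitTheorem

theorem Real.prod_zpow_eq_one_iff_sum_mul_log_eq_zero {ι : Type*} (s : Finset ι) {x : ι → ℝ}
    (hx : ∀ i ∈ s, 0 < x i) (n : ι → ℤ) :
    ∏ i ∈ s, x i ^ n i = 1 ↔ ∑ i ∈ s, n i * Real.log (x i) = 0 := by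
  have hpos : 0 < ∏ i ∈ s, x i ^ n i := Finset.prod_pos fun i hi ↦ zpow_pos (hx i hi) _
  rw [← Real.log_injOn_pos.eq_iff hpos (Set.mem_Ioi.mpr one_pos), Real.log_one,
    Real.log_prod fun i hi ↦ (zpow_pos (hx i hi) _).ne']
  simp only [Real.log_zpow]

theorem exists_forall_intCast_eq_iff {R ι : Type*} [AddGroupWithOne R] [CharZero R] (n : ι → ℤ) :
    (∃ r : R, ∀ i, (n i : R) = r) ↔ ∃ m : ℤ, ∀ i, n i = m := by
  refine ⟨fun ⟨r, hr⟩ ↦ ?_, fun ⟨m, hm⟩ ↦ ⟨m, fun i ↦ congrArg _ (hm i)⟩⟩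
  rcases isEmpty_or_nonempty ι with hι | ⟨⟨i₀⟩⟩
  · exact ⟨0, fun i ↦ isEmptyElim i⟩
  · exact ⟨n i₀, fun i ↦ Int.cast_injective ((hr i).trans (hr i₀).symm)⟩

namespace NumberField

variable {K : Type*} [Field K]

noncomputable def InfinitePlace.ofReal (σ : K →+* ℝ) : InfinitePlace K :=
  InfinitePlace.mk (Complex.ofRealHom.comp σ)

theorem InfinitePlace.ofReal_apply (σ : K →+* ℝ) (x : K) : ofReal σ x = |σ x| := by
  simp [ofReal, InfinitePlace.apply]

theorem InfinitePlace.isReal_ofReal (σ : K →+* ℝ) : IsReal (ofReal σ) :=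
  isReal_mk_iff.mpr <| ComplexEmbedding.isReal_iff.mpr <| by
    ext x; simp [ComplexEmbedding.conjugate, Complex.conj_ofReal]

theorem InfinitePlace.ofReal_injective : Function.Injective (ofReal : (K →+* ℝ) → _) := by
  intro σ τ h
  have hσ := ComplexEmbedding.isReal_iff.mp (isReal_mk_iff.mp (isReal_ofReal σ))
  rw [ofReal, ofReal, mk_eq_iff, hσ, or_self] at h
  ext x
  simpa using RingHom.congr_fun h x

variable [NumberField K]

open scoped Classical in
theorem Units.eq_zero_of_forall_sum_mul_logEmbedding_eq_zero {c : logSpace K}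
    (h : ∀ u : (𝓞 K)ˣ, ∑ w, c w * logEmbedding K (Additive.ofMul u) w = 0) : c = 0 := by
  have hf : Fintype.linearCombination ℝ c = 0 := by
    refine LinearMap.ext_on (unitLattice_span_eq_top K) ?_
    rintro _ ⟨u, -, rfl⟩
    simpa [Fintype.linearCombination_apply, mul_comm] using h (Additive.toMul u)
  ext w
  simpa [Fintype.linearCombination_apply, Pi.single_apply] using
    LinearMap.congr_fun hf (Pi.single w 1)

theorem Units.exists_eq_mul_mult_of_forall_sum_mul_log_eq_zero {a : InfinitePlace K → ℝ}
    (h : ∀ u : (𝓞 K)ˣ, ∑ w, a w * Real.log (w u) = 0) : ∃ r : ℝ, ∀ w, a w = r * mult w := by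
  classical
  -- By the product formula `a - r • mult` is again orthogonal to all log vectors; `r` is chosen
  -- so that it vanishes at `w₀`, hence it is determined by its coordinates in `logSpace K`.
  set r := a w₀ / mult (w₀ : InfinitePlace K)
  have hr : a w₀ - r * mult (w₀ : InfinitePlace K) = 0 := by simp [r]
  have hc := eq_zero_of_forall_sum_mul_logEmbedding_eq_zero (K := K)
    (c := fun w ↦ a w / mult w.1 - r) fun u ↦ by
      have hsum : ∑ w, (a w - r * mult w) * Real.log (w u) = 0 := by
        simp only [sub_mul, Finset.sum_sub_distrib, mul_assoc, ← Finset.mul_sum, h,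
          sum_mult_mul_log, mul_zero, sub_zero]
      rw [Fintype.sum_eq_add_sum_subtype_ne _ w₀, hr, zero_mul, zero_add] at hsum
      rw [← hsum]
      refine Finset.sum_congr rfl fun w _ ↦ ?_
      rw [logEmbedding_component]
      field_simp [mult_coe_ne_zero]
  refine ⟨r, fun w ↦ ?_⟩
  by_cases hw : w = w₀
  · subst hw; linarith
  · have := congr_fun hc ⟨w, hw⟩
    simp only [Pi.zero_apply, sub_eq_zero] at this
    field_simp [mult_coe_ne_zero] at this
    linarith

theorem Units.sum_mul_log_pow (a : InfinitePlace K → ℝ) (u : (𝓞 K)ˣ) (k : ℕ) :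
    ∑ w, a w * Real.log (w ↑(u ^ k)) = k * ∑ w, a w * Real.log (w u) := by
  simp only [Units.val_pow_eq_pow_val, map_pow, Real.log_pow, Finset.mul_sum]
  exact Finset.sum_congr rfl fun w _ ↦ by ring

theorem Units.forall_mem_sum_mul_log_eq_zero_iff (Γ : Subgroup (𝓞 K)ˣ) [Γ.FiniteIndex]
    (a : InfinitePlace K → ℝ) :
    (∀ u ∈ Γ, ∑ w, a w * Real.log (w u) = 0) ↔ ∃ r : ℝ, ∀ w, a w = r * mult w := by
  refine ⟨fun h ↦ exists_eq_mul_mult_of_forall_sum_mul_log_eq_zero fun u ↦ ?_, ?_⟩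
  · have := h _ (Γ.pow_index_mem u)
    rw [sum_mul_log_pow] at this
    exact (mul_eq_zero.mp this).resolve_left (Nat.cast_ne_zero.mpr Γ.index_ne_zero_of_finite)
  · rintro ⟨r, hr⟩ u -
    simp only [hr, mul_assoc, ← Finset.mul_sum, sum_mult_mul_log, mul_zero]

theorem InfinitePlace.card_le_finrank : Fintype.card (InfinitePlace K) ≤ Module.finrank ℚ K := by
  have := card_add_two_mul_card_eq_rank K
  rw [card_eq_nrRealPlaces_add_nrComplexPlaces]
  omega

theorem InfinitePlace.bijective_ofReal_comp {ι : Type*} [Fintype ι] {σ : ι → K →+* ℝ}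
    (hσ : Function.Injective σ) (hcard : Fintype.card ι = Module.finrank ℚ K) :
    Function.Bijective (ofReal ∘ σ) :=
  have hinj : Function.Injective (ofReal ∘ σ) := ofReal_injective.comp hσ
  (Fintype.bijective_iff_injective_and_card _).mpr
    ⟨hinj, le_antisymm (Fintype.card_le_of_injective _ hinj) (hcard ▸ card_le_finrank)⟩

end NumberField

theorem prod_abs_embedding_zpow_eq_one_iff_parallel_of_finiteIndex_general
    {F : Type} [Field F] [NumberField F] {d : ℕ}
    (σ : Fin d → (F →+* ℝ)) (hσ : Function.Injective σ)
    (hd : d = Module.finrank ℚ F)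
    (Γ : Subgroup (𝓞 F)ˣ) (hΓ : Γ.FiniteIndex)
    (n : Fin d → ℤ) :
    (∀ t ∈ Γ, ∏ i, |σ i (algebraMap (𝓞 F) F (t : 𝓞 F))| ^ n i = 1) ↔
      ∃ m : ℤ, ∀ i, n i = m := by
  let e := Equiv.ofBijective _ (bijective_ofReal_comp hσ (by simpa using hd))
  have hmult (w : InfinitePlace F) : mult w = 1 := by
    obtain ⟨i, rfl⟩ := e.surjective w
    exact (isReal_ofReal (σ i)).mult_eq_one
  calc (∀ t ∈ Γ, ∏ i, |σ i (algebraMap (𝓞 F) F (t : 𝓞 F))| ^ n i = 1)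
      ↔ ∀ t ∈ Γ, ∑ w, (n (e.symm w) : ℝ) * Real.log (w t) = 0 := by
        refine forall₂_congr fun t _ ↦ ?_
        rw [Real.prod_zpow_eq_one_iff_sum_mul_log_eq_zero _ fun i _ ↦ by simp, ← e.sum_comp]
        simp only [Equiv.symm_apply_apply]
        simp only [e, Equiv.ofBijective_apply, Function.comp_apply, ofReal_apply]
    _ ↔ ∃ r : ℝ, ∀ w, (n (e.symm w) : ℝ) = r * mult w := forall_mem_sum_mul_log_eq_zero_iff Γ _
    _ ↔ ∃ r : ℝ, ∀ i, (n i : ℝ) = r := by simp [hmult, e.symm.forall_congr_left]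
    _ ↔ ∃ m : ℤ, ∀ i, n i = m := exists_forall_intCast_eq_iff n

/-- Let `F` be a totally real number field of degree `d` over `ℚ`, with
(pairwise distinct) real embeddings `σ 0, …, σ (d-1) : F → ℝ`, and let `Γ` be a finite
index subgroup of the unit group `(𝓞 F)ˣ`.  Fix a `d`-tuple of integers `n ≠ 0`.  Then
`∏ i, |σ i t| ^ (n i) = 1` for every `t ∈ Γ` if and only if all the `n i` are equal to a
common integer. -/
theorem prod_abs_embedding_zpow_eq_one_iff_parallel_of_finiteIndex
    {F : Type} [Field F] [NumberField F] {d : ℕ}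
    (σ : Fin d → (F →+* ℝ)) (hσ : Function.Injective σ)
    (hd : d = Module.finrank ℚ F)
    (Γ : Subgroup (𝓞 F)ˣ) (hΓ : Γ.FiniteIndex)
    (n : Fin d → ℤ) (hn : n ≠ 0) :
    (∀ t ∈ Γ, ∏ i, |σ i (algebraMap (𝓞 F) F (t : 𝓞 F))| ^ n i = 1) ↔
      ∃ m : ℤ, ∀ i, n i = m :=
  prod_abs_embedding_zpow_eq_one_iff_parallel_of_finiteIndex_general σ hσ hd Γ hΓ n
end

section
/- Let F be a totally real number field of degree d over ℚ, with real embeddings σ_1, …, σ_d : F → ℝ, and let 𝓞_F be its ring of integers. Let Γ be a subgroup of finite index of the unit group 𝓞_F^× such that every element t ∈ Γ has norm N_{F/ℚ}(t) = ∏_{i=1}^d σ_i(t) = 1. Then for every d-tuple of integers (n_1, …, n_d), one has ∏_{i=1}^d σ_i(t)^{n_i} = 1 for every t ∈ Γ if and only if all the n_i are equal to a common integer. -/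
/-!
The embeddings `σ i` are exactly the `d` real places of `F`, so all places are real, and taking
`log |·|` turns the hypothesis into `∑ i, n i * log |σ i t| = 0` for `t ∈ Γ`. Subtract `c` times
the norm relation `∑ i, log |σ i t| = 0`, where `c = n j` is the least `n i`. By the unit theorem
some `t ∈ Γ` (a power of a unit) has `|σ i t| < 1` for all `i ≠ j`, so every term
`(n i - c) * log |σ i t|` of the resulting vanishing sum is `≤ 0`, hence `0`, and `n i = c`.
-/

open NumberField InfinitePlace

namespace NumberField.InfinitePlace

variable {K : Type*} [Field K]

noncomputable def ofReal_s4 (φ : K →+* ℝ) : InfinitePlace K :=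
  mk (Complex.ofRealHom.comp φ)

theorem ofReal_apply_s4 (φ : K →+* ℝ) (x : K) : ofReal_s4 φ x = |φ x| := by
  simp [ofReal_s4, apply]

theorem isReal_ofReal_s4 (φ : K →+* ℝ) : IsReal (ofReal_s4 φ) :=
  isReal_mk_iff.mpr <| ComplexEmbedding.isReal_iff.mpr <| by
    ext x; simp [ComplexEmbedding.conjugate]

theorem ofReal_injective_s4 : Function.Injective (ofReal_s4 (K := K)) := by
  intro φ ψ h
  have hφ : ComplexEmbedding.conjugate (Complex.ofRealHom.comp φ) = Complex.ofRealHom.comp φ :=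
    ComplexEmbedding.isReal_iff.mp (isReal_mk_iff.mp (isReal_ofReal_s4 φ))
  have h' : Complex.ofRealHom.comp φ = Complex.ofRealHom.comp ψ := by
    simpa only [hφ, or_self] using mk_eq_iff.mp h
  ext x
  simpa using RingHom.congr_fun h' x

theorem bijective_ofReal_comp_s4 [NumberField K] {ι : Type*} [Fintype ι] {σ : ι → K →+* ℝ}
    (hσ : Function.Injective σ) (hcard : Fintype.card ι = Module.finrank ℚ K) :
    Function.Bijective (ofReal_s4 ∘ σ) := by
  refine (ofReal_injective_s4.comp hσ).bijective_of_nat_card_le ?_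
  rw [Nat.card_eq_fintype_card, Nat.card_eq_fintype_card, hcard,
    card_eq_nrRealPlaces_add_nrComplexPlaces, ← card_add_two_mul_card_eq_rank]
  omega

end NumberField.InfinitePlace

namespace NumberField.Units

variable {K : Type*} [Field K] [NumberField K]

theorem exists_mem_log_lt_zero_of_finiteIndex (Γ : Subgroup (𝓞 K)ˣ) [Γ.FiniteIndex]
    (w₁ : InfinitePlace K) : ∃ t ∈ Γ, ∀ w ≠ w₁, Real.log (w t) < 0 := by
  obtain ⟨u, hu⟩ := dirichletUnitTheorem.exists_unit K w₁
  refine ⟨u ^ Γ.index, Γ.pow_index_mem u, fun w hw => ?_⟩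
  have hk : (0 : ℝ) < Γ.index :=
    Nat.cast_pos.mpr (Nat.pos_of_ne_zero Subgroup.FiniteIndex.index_ne_zero)
  simpa [Real.log_pow] using mul_neg_of_pos_of_neg hk (hu w hw)

theorem exists_eq_mul_mult_of_sum_mul_log_eq_zero (Γ : Subgroup (𝓞 K)ˣ) [Γ.FiniteIndex]
    (c : InfinitePlace K → ℝ) (h : ∀ t ∈ Γ, ∑ w, c w * Real.log (w t) = 0) :
    ∃ l : ℝ, ∀ w, c w = l * w.mult := by
  obtain ⟨w₁, hmin⟩ := Finite.exists_min fun w : InfinitePlace K => c w / w.mult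
  obtain ⟨t, htΓ, ht⟩ := exists_mem_log_lt_zero_of_finiteIndex Γ w₁
  set l := c w₁ / w₁.mult
  have hcoeff : ∀ w, 0 ≤ c w - l * w.mult := fun w => by
    have := hmin w
    rw [le_div_iff₀ (Nat.cast_pos.mpr mult_pos)] at this
    linarith
  have hcoeff_w₁ : c w₁ - l * w₁.mult = 0 := by
    rw [div_mul_cancel₀ _ (Nat.cast_ne_zero.mpr mult_ne_zero : (w₁.mult : ℝ) ≠ 0), sub_self]
  have hnonpos : ∀ w ∈ Finset.univ, (c w - l * w.mult) * Real.log (w t) ≤ 0 := fun w _ => by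
    rcases eq_or_ne w w₁ with rfl | hw
    · rw [hcoeff_w₁, zero_mul]
    · exact mul_nonpos_of_nonneg_of_nonpos (hcoeff w) (ht w hw).le
  have hsum : ∑ w, (c w - l * w.mult) * Real.log (w t) = 0 := by
    simp only [sub_mul, Finset.sum_sub_distrib, mul_assoc, ← Finset.mul_sum, h t htΓ,
      sum_mult_mul_log, mul_zero, sub_zero]
  refine ⟨l, fun w => ?_⟩
  rcases eq_or_ne w w₁ with rfl | hw
  · linarith
  · have hterm := (Finset.sum_eq_zero_iff_of_nonpos hnonpos).mp hsum w (Finset.mem_univ w)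
    linarith [(mul_eq_zero.mp hterm).resolve_right (ht w hw).ne]

end NumberField.Units

/-- Let `F` be a totally real number field of degree `d` over `ℚ`, with
(pairwise distinct) real embeddings `σ 0, …, σ (d-1) : F → ℝ`, and let `Γ` be a finite
index subgroup of the unit group `(𝓞 F)ˣ` all of whose elements have norm
`∏ i, σ i t = 1`.  Then for every `d`-tuple of integers `n`, one has
`∏ i, σ i t ^ (n i) = 1` for every `t ∈ Γ` if and only if all the `n i` are equal to a
common integer. -/
theorem prod_embedding_zpow_eq_one_iff_parallel_of_norm_one
    {F : Type} [Field F] [NumberField F] {d : ℕ}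
    (σ : Fin d → (F →+* ℝ)) (hσ : Function.Injective σ)
    (hd : d = Module.finrank ℚ F)
    (Γ : Subgroup (𝓞 F)ˣ) (hΓ : Γ.FiniteIndex)
    (hnorm : ∀ t ∈ Γ, ∏ i, σ i (algebraMap (𝓞 F) F (t : 𝓞 F)) = 1)
    (n : Fin d → ℤ) :
    (∀ t ∈ Γ, ∏ i, σ i (algebraMap (𝓞 F) F (t : 𝓞 F)) ^ n i = 1) ↔
      ∃ m : ℤ, ∀ i, n i = m := by
  constructor
  · intro H
    have hbij := bijective_ofReal_comp_s4 hσ (by rw [Fintype.card_fin, hd])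
    have : IsTotallyReal F := ⟨fun w => by obtain ⟨i, rfl⟩ := hbij.2 w; exact isReal_ofReal_s4 _⟩
    obtain ⟨e, he⟩ : ∃ e : Fin d ≃ InfinitePlace F, ∀ i, e i = ofReal_s4 (σ i) :=
      ⟨Equiv.ofBijective _ hbij, fun _ => rfl⟩
    obtain ⟨l, hl⟩ := Units.exists_eq_mul_mult_of_sum_mul_log_eq_zero Γ
      (fun w => (n (e.symm w) : ℝ)) fun t ht => by
        rw [← e.sum_comp, ← Real.log_one, ← H t ht, Real.log_prod fun i _ =>
          zpow_ne_zero _ ((map_ne_zero _).mpr (by simp))]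
        simp only [e.symm_apply_apply]
        simp only [he, ofReal_apply_s4, Real.log_abs, Real.log_zpow]
    have hconst : ∀ w, (n (e.symm w) : ℝ) = l := by simpa [IsTotallyReal.mult_eq] using hl
    refine ⟨n (e.symm (Classical.arbitrary _)), fun i => ?_⟩
    exact_mod_cast (e.symm_apply_apply i ▸ hconst (e i)).trans (hconst _).symm
  · rintro ⟨m, hm⟩ t ht
    simp only [hm, Finset.prod_zpow, hnorm t ht, one_zpow]
end

section
/- Let I be a nonempty finite set and let I^0, I^1, I^2, I^3 be pairwise disjoint subsets of I with I^0 ∪ I^1 ∪ I^2 ∪ I^3 = I. Let k_1, k_2 : I → ℤ be functions satisfying the dominance condition k_1(σ) ≥ k_2(σ) ≥ 0 for every σ ∈ I. Suppose that (i) there is an integer κ such that k_1(σ) + k_2(σ) = κ for every σ ∈ I^0, k_1(σ) − k_2(σ) − 2 = κ for every σ ∈ I^1, −(k_1(σ) − k_2(σ) + 4) = κ for every σ ∈ I^2, and −(k_1(σ) + k_2(σ) + 6) = κ for every σ ∈ I^3; and (ii) there is an integer θ such that k_2(σ) = θ for every σ ∈ I^0, −k_2(σ) − 2 = θ for every σ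 ∈ I^1, and −k_1(σ) − 3 = θ for every σ ∈ I^2 ∪ I^3. Then one of the following holds: (a) I = I^0 and k_2 is constant on I; (b) I = I^1 and k_2 is constant on I; (c) I = I^2 ∪ I^3 and k_1 is constant on I. -/
/-!
By (ii) and dominance, `θ = k₂ σ ≥ 0` on `I⁰` while `θ ≤ -2` on the rest of `I`; by (i),
`κ = k₁ σ - k₂ σ - 2 ≥ -2` on `I¹` while `κ ≤ -4` on `I² ∪ I³`. So the first nonempty set among
`I⁰`, `I¹`, `I² ∪ I³` is all of `I`, and (ii) then pins down `k₂` resp. `k₁`.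
-/

theorem Set.eq_univ_of_union_eq_univ_of_separated {α : Type*} {s t : Set α} {p : Prop}
    (hu : s ∪ t = Set.univ) (hs : s.Nonempty) (hps : ∀ x ∈ s, p) (hpt : ∀ x ∈ t, ¬p) :
    s = Set.univ :=
  Set.eq_univ_of_forall fun x =>
    (hu ▸ Set.mem_univ x : x ∈ s ∪ t).resolve_right fun hx => hpt x hx (hps _ hs.some_mem)

theorem kostantParallel_det_trichotomy_general
    {I : Type} (I0 I1 I2 I3 : Set I)
    (hcover : I0 ∪ I1 ∪ I2 ∪ I3 = Set.univ)
    (k₁ k₂ : I → ℤ) (hdom : ∀ σ, k₂ σ ≤ k₁ σ ∧ 0 ≤ k₂ σ) (κ θ : ℤ)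
    (h1 : ∀ σ ∈ I1, k₁ σ - k₂ σ - 2 = κ)
    (h2 : ∀ σ ∈ I2, -(k₁ σ - k₂ σ + 4) = κ)
    (h3 : ∀ σ ∈ I3, -(k₁ σ + k₂ σ + 6) = κ)
    (g0 : ∀ σ ∈ I0, k₂ σ = θ)
    (g1 : ∀ σ ∈ I1, -k₂ σ - 2 = θ)
    (g23 : ∀ σ ∈ I2 ∪ I3, -k₁ σ - 3 = θ) :
    (I0 = Set.univ ∧ ∃ c : ℤ, ∀ σ, k₂ σ = c) ∨
    (I1 = Set.univ ∧ ∃ c : ℤ, ∀ σ, k₂ σ = c) ∨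
    (I2 ∪ I3 = Set.univ ∧ ∃ c : ℤ, ∀ σ, k₁ σ = c) := by
  have θ_nonneg : ∀ σ ∈ I0, 0 ≤ θ := fun σ hσ => g0 σ hσ ▸ (hdom σ).2
  have θ_neg : ∀ σ ∈ I1 ∪ (I2 ∪ I3), ¬0 ≤ θ := by
    rintro σ (hσ | hσ) <;> [have := g1 σ hσ; have := g23 σ hσ] <;> have := hdom σ <;> omega
  have κ_ge : ∀ σ ∈ I1, -2 ≤ κ := fun σ hσ => by have := h1 σ hσ; have := hdom σ; omega
  have κ_lt : ∀ σ ∈ I2 ∪ I3, ¬-2 ≤ κ := by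
    rintro σ (hσ | hσ) <;> [have := h2 σ hσ; have := h3 σ hσ] <;> have := hdom σ <;> omega
  have hcover' : I0 ∪ (I1 ∪ (I2 ∪ I3)) = Set.univ := by simpa only [Set.union_assoc] using hcover
  rcases I0.eq_empty_or_nonempty with hI0 | hI0
  · rw [hI0, Set.empty_union] at hcover'
    rcases I1.eq_empty_or_nonempty with hI1 | hI1
    · rw [hI1, Set.empty_union] at hcover'
      refine .inr <| .inr ⟨hcover', -θ - 3, fun σ => ?_⟩
      have := g23 σ (hcover' ▸ Set.mem_univ σ)
      omega
    · have hI1_univ := Set.eq_univ_of_union_eq_univ_of_separated hcover' hI1 κ_ge κ_lt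
      refine .inr <| .inl ⟨hI1_univ, -θ - 2, fun σ => ?_⟩
      have := g1 σ (hI1_univ ▸ Set.mem_univ σ)
      omega
  · have hI0_univ := Set.eq_univ_of_union_eq_univ_of_separated hcover' hI0 θ_nonneg θ_neg
    exact .inl ⟨hI0_univ, θ, fun σ => g0 σ (hI0_univ ▸ Set.mem_univ σ)⟩

/-- Let `I` be a nonempty finite set decomposed into pairwise disjoint
subsets `I⁰, I¹, I², I³`, and let `k₁, k₂ : I → ℤ` satisfy `k₁ σ ≥ k₂ σ ≥ 0` for all `σ`.
Suppose (i) there is `κ : ℤ` with `k₁ σ + k₂ σ = κ` on `I⁰`, `k₁ σ - k₂ σ - 2 = κ` on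
`I¹`, `-(k₁ σ - k₂ σ + 4) = κ` on `I²`, `-(k₁ σ + k₂ σ + 6) = κ` on `I³`, and (ii) there
is `θ : ℤ` with `k₂ σ = θ` on `I⁰`, `-k₂ σ - 2 = θ` on `I¹`, and `-k₁ σ - 3 = θ` on
`I² ∪ I³`.  Then one of the following holds: (a) `I = I⁰` and `k₂` is constant;
(b) `I = I¹` and `k₂` is constant; (c) `I = I² ∪ I³` and `k₁` is constant. -/
theorem kostantParallel_det_trichotomy
    {I : Type} [Finite I] [Nonempty I] (I0 I1 I2 I3 : Set I)
    (h01 : Disjoint I0 I1) (h02 : Disjoint I0 I2) (h03 : Disjoint I0 I3)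
    (h12 : Disjoint I1 I2) (h13 : Disjoint I1 I3) (h23 : Disjoint I2 I3)
    (hcover : I0 ∪ I1 ∪ I2 ∪ I3 = Set.univ)
    (k₁ k₂ : I → ℤ) (hdom : ∀ σ, k₂ σ ≤ k₁ σ ∧ 0 ≤ k₂ σ) (κ θ : ℤ)
    (h0 : ∀ σ ∈ I0, k₁ σ + k₂ σ = κ)
    (h1 : ∀ σ ∈ I1, k₁ σ - k₂ σ - 2 = κ)
    (h2 : ∀ σ ∈ I2, -(k₁ σ - k₂ σ + 4) = κ)
    (h3 : ∀ σ ∈ I3, -(k₁ σ + k₂ σ + 6) = κ)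
    (g0 : ∀ σ ∈ I0, k₂ σ = θ)
    (g1 : ∀ σ ∈ I1, -k₂ σ - 2 = θ)
    (g23 : ∀ σ ∈ I2 ∪ I3, -k₁ σ - 3 = θ) :
    (I0 = Set.univ ∧ ∃ c : ℤ, ∀ σ, k₂ σ = c) ∨
    (I1 = Set.univ ∧ ∃ c : ℤ, ∀ σ, k₂ σ = c) ∨
    (I2 ∪ I3 = Set.univ ∧ ∃ c : ℤ, ∀ σ, k₁ σ = c) :=
  kostantParallel_det_trichotomy_general I0 I1 I2 I3 hcover k₁ k₂ hdom κ θ h1 h2 h3 g0 g1 g23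
end
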